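/- arXiv:0711.4792 — 7 statements merged into one kernel-verified Lean document; each statement's English description precedes it below -/
import Mathlib

section
/- For every α > 0, the achievable region R_in is contained in the partial outer-bound region R_part,out^α. -/
open Matrix Filter
open scoped ComplexOrder

noncomputable section

/-- `Mat m n` : complex `m × n` matrix. -/
abbrev Mat (m n : ℕ) := Matrix (Fin m) (Fin n) ℂ

/-- `LD M = log det (I + M)` (real part of the determinant). -/
def LD {ι : Type*} [Fintype ι] [DecidableEq ι] (M : Matrix ι ι ℂ) : ℝ :=
  Real.log ((1 + M).det.re)

/-- real trace. -/
def rTr {ι : Type*} [Fintype ι] (M : Matrix ι ι ℂ) : ℝ := M.trace.re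

/-- `G = [H_pp  H_cp]`. -/
def Gmat {npt nct npr : ℕ} (Hpp : Mat npr npt) (Hcp : Mat npr nct) :
    Matrix (Fin npr) (Fin npt ⊕ Fin nct) ℂ :=
  fromCols Hpp Hcp

/-- `G_α = [H_pp  H_cp/√α]`. -/
def Galpha {npt nct npr : ℕ} (Hpp : Mat npr npt) (Hcp : Mat npr nct) (α : ℝ) :
    Matrix (Fin npr) (Fin npt ⊕ Fin nct) ℂ :=
  fromCols Hpp (((Real.sqrt α : ℂ))⁻¹ • Hcp)

/-- The achievable region `R_in`. -/
def Rin {npt nct npr ncr : ℕ} (Hpp : Mat npr npt) (Hcp : Mat npr nct) (Hcc : Mat ncr nct)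
    (Pp Pc : ℝ) : Set (ℝ × ℝ) :=
  closure (convexHull ℝ
    {R : ℝ × ℝ | 0 ≤ R.1 ∧ 0 ≤ R.2 ∧
      ∃ (Sp : Mat npt npt) (Scp Scc : Mat nct nct) (Q : Mat npt nct),
        Sp.PosSemidef ∧ Scp.PosSemidef ∧ Scc.PosSemidef ∧
        (fromBlocks Sp Q Qᴴ Scp).PosSemidef ∧
        rTr Sp ≤ Pp ∧ rTr Scp + rTr Scc ≤ Pc ∧
        R.1 ≤ LD (Gmat Hpp Hcp * fromBlocks Sp Q Qᴴ Scp * (Gmat Hpp Hcp)ᴴ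
                  + Hcp * Scc * Hcpᴴ)
              - LD (Hcp * Scc * Hcpᴴ) ∧
        R.2 ≤ LD (Hcc * Scc * Hccᴴ)})

/-- The partial outer bound region `R_part,out^α`. -/
def Rpart {npt nct npr ncr : ℕ} (Hpp : Mat npr npt) (Hcp : Mat npr nct) (Hcc : Mat ncr nct)
    (Pp Pc : ℝ) (α : ℝ) : Set (ℝ × ℝ) :=
  closure (convexHull ℝ
    {R : ℝ × ℝ | 0 ≤ R.1 ∧ 0 ≤ R.2 ∧
      ∃ (Qp : Matrix (Fin npt ⊕ Fin nct) (Fin npt ⊕ Fin nct) ℂ) (Scc : Mat nct nct),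
        Qp.PosSemidef ∧ Scc.PosSemidef ∧
        rTr Qp + rTr Scc ≤ Pp + α * Pc ∧
        R.1 ≤ LD (Galpha Hpp Hcp α * Qp * (Galpha Hpp Hcp α)ᴴ
                  + ((α : ℂ))⁻¹ • (Hcp * Scc * Hcpᴴ))
              - LD (((α : ℂ))⁻¹ • (Hcp * Scc * Hcpᴴ)) ∧
        R.2 ≤ LD (((α : ℂ))⁻¹ • (Hcc * Scc * Hccᴴ))})

/-- Tuples in `R_ach,rate` (no power constraints). -/
def RachRate {npt nct npr ncr : ℕ} (Hpp : Mat npr npt) (Hcp : Mat npr nct) (Hcc : Mat ncr nct)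
    (Rp Rc : ℝ) (Sp : Mat npt npt) (Scp Scc : Mat nct nct) (Q : Mat npt nct) : Prop :=
  0 ≤ Rp ∧ 0 ≤ Rc ∧ Sp.PosSemidef ∧ Scp.PosSemidef ∧ Scc.PosSemidef ∧
  (fromBlocks Sp Q Qᴴ Scp).PosSemidef ∧
  Rp ≤ LD (Gmat Hpp Hcp * fromBlocks Sp Q Qᴴ Scp * (Gmat Hpp Hcp)ᴴ + Hcp * Scc * Hcpᴴ)
        - LD (Hcp * Scc * Hcpᴴ) ∧
  Rc ≤ LD (Hcc * Scc * Hccᴴ)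

/-- The Lagrangian `L`. -/
def Lfun {npt nct : ℕ} (Pp Pc μ Rp Rc : ℝ) (Sp : Mat npt npt) (Scp Scc : Mat nct nct)
    (l1 l2 : ℝ) : ℝ :=
  μ * Rp + Rc - l1 * (rTr Sp - Pp) - l2 * (rTr Scp + rTr Scc - Pc)

/-- The Lagrangian `L₁`. -/
def L1fun {npt nct : ℕ} (Pp Pc μ Rp Rc : ℝ) (Sp : Mat npt npt) (Scp Scc : Mat nct nct)
    (l α : ℝ) : ℝ :=
  μ * Rp + Rc - l * (rTr Sp + α * rTr Scp + α * rTr Scc - Pp - α * Pc)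

/-- `K = [0  H_cc/√α]`. -/
def Kmat (npt : ℕ) {nct ncr : ℕ} (Hcc : Mat ncr nct) (α : ℝ) :
    Matrix (Fin ncr) (Fin npt ⊕ Fin nct) ℂ :=
  fromCols 0 (((Real.sqrt α : ℂ))⁻¹ • Hcc)

/-- `K̄ = [[H_pp, H_cp/√α],[0, H_cc/√α]]`. -/
def Kbar {npt nct npr ncr : ℕ} (Hpp : Mat npr npt) (Hcp : Mat npr nct) (Hcc : Mat ncr nct)
    (α : ℝ) : Matrix (Fin npr ⊕ Fin ncr) (Fin npt ⊕ Fin nct) ℂ :=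
  fromBlocks Hpp (((Real.sqrt α : ℂ))⁻¹ • Hcp) 0 (((Real.sqrt α : ℂ))⁻¹ • Hcc)

/-- The region `R₁^α` (licensed user encoded first). -/
def R1reg {npt nct npr ncr : ℕ} (Hpp : Mat npr npt) (Hcp : Mat npr nct) (Hcc : Mat ncr nct)
    (Pp Pc : ℝ) (α : ℝ) : Set (ℝ × ℝ) :=
  closure (convexHull ℝ
    {R : ℝ × ℝ | 0 ≤ R.1 ∧ 0 ≤ R.2 ∧
      ∃ Qp Qc : Matrix (Fin npt ⊕ Fin nct) (Fin npt ⊕ Fin nct) ℂ,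
        Qp.PosSemidef ∧ Qc.PosSemidef ∧ rTr Qp + rTr Qc ≤ Pp + α * Pc ∧
        R.1 ≤ LD (Galpha Hpp Hcp α * Qp * (Galpha Hpp Hcp α)ᴴ
                  + Galpha Hpp Hcp α * Qc * (Galpha Hpp Hcp α)ᴴ)
              - LD (Galpha Hpp Hcp α * Qc * (Galpha Hpp Hcp α)ᴴ) ∧
        R.2 ≤ LD (Kmat npt Hcc α * Qc * (Kmat npt Hcc α)ᴴ)})

/-- The region `R₂^α` (cognitive user encoded first). -/
def R2reg {npt nct npr ncr : ℕ} (Hpp : Mat npr npt) (Hcp : Mat npr nct) (Hcc : Mat ncr nct)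
    (Pp Pc : ℝ) (α : ℝ) : Set (ℝ × ℝ) :=
  closure (convexHull ℝ
    {R : ℝ × ℝ | 0 ≤ R.1 ∧ 0 ≤ R.2 ∧
      ∃ Qp Qc : Matrix (Fin npt ⊕ Fin nct) (Fin npt ⊕ Fin nct) ℂ,
        Qp.PosSemidef ∧ Qc.PosSemidef ∧ rTr Qp + rTr Qc ≤ Pp + α * Pc ∧
        R.1 ≤ LD (Galpha Hpp Hcp α * Qp * (Galpha Hpp Hcp α)ᴴ) ∧
        R.2 ≤ LD (Kmat npt Hcc α * Qp * (Kmat npt Hcc α)ᴴ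
                  + Kmat npt Hcc α * Qc * (Kmat npt Hcc α)ᴴ)
              - LD (Kmat npt Hcc α * Qp * (Kmat npt Hcc α)ᴴ)})

/-- The dirty-paper-coding region `D^α`. -/
def Dreg {npt nct npr ncr : ℕ} (Hpp : Mat npr npt) (Hcp : Mat npr nct) (Hcc : Mat ncr nct)
    (Pp Pc : ℝ) (α : ℝ) : Set (ℝ × ℝ) :=
  closure (convexHull ℝ
    (R1reg Hpp Hcp Hcc Pp Pc α ∪ R2reg Hpp Hcp Hcc Pp Pc α))

/-- `Σ_z = [[I, Q_z],[Q_z†, I]]`. -/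
def Sigmaz {npr ncr : ℕ} (Qz : Mat npr ncr) :
    Matrix (Fin npr ⊕ Fin ncr) (Fin npr ⊕ Fin ncr) ℂ :=
  fromBlocks 1 Qz Qzᴴ 1

/-- The outer bound region `R_out^{α,Σ_z}`. -/
def Rout {npt nct npr ncr : ℕ} (Hpp : Mat npr npt) (Hcp : Mat npr nct) (Hcc : Mat ncr nct)
    (Pp Pc : ℝ) (α : ℝ) (Qz : Mat npr ncr) : Set (ℝ × ℝ) :=
  closure (convexHull ℝ
    {R : ℝ × ℝ | 0 ≤ R.1 ∧ 0 ≤ R.2 ∧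
      ∃ Qp Qc : Matrix (Fin npt ⊕ Fin nct) (Fin npt ⊕ Fin nct) ℂ,
        Qp.PosSemidef ∧ Qc.PosSemidef ∧ rTr Qp + rTr Qc ≤ Pp + α * Pc ∧
        R.1 ≤ LD (Galpha Hpp Hcp α * Qp * (Galpha Hpp Hcp α)ᴴ
                  + Galpha Hpp Hcp α * Qc * (Galpha Hpp Hcp α)ᴴ)
              - LD (Galpha Hpp Hcp α * Qc * (Galpha Hpp Hcp α)ᴴ) ∧
        R.2 ≤ Real.log ((Sigmaz Qz + Kbar Hpp Hcp Hcc α * Qc * (Kbar Hpp Hcp Hcc α)ᴴ).det.re)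
              - Real.log ((Sigmaz Qz).det.re)})

/-!
Rescale the cognitive transmitter: with `D = diag(I, √α I)`, put `Q_p = D Σ_pnet D†` and replace
`Σ_cc` by `α Σ_cc`. Since `G_α D = G`, both rate expressions are unchanged, and the two separate
power constraints add up to `Tr Q_p + Tr (α Σ_cc) = Tr Σ_p + α (Tr Σ_cp + Tr Σ_cc) ≤ P_p + α P_c`.
-/

lemma trace_fromBlocks {m n R : Type*} [Fintype m] [Fintype n] [AddCommMonoid R]
    (A : Matrix m m R) (B : Matrix m n R) (C : Matrix n m R) (D : Matrix n n R) :
    (fromBlocks A B C D).trace = A.trace + D.trace := by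
  simp [trace, Fintype.sum_sum_type]

lemma inv_smul_mul_smul_mul_cancel {K l m n : Type*} [Field K] [Fintype m] [Fintype n] {a : K}
    (ha : a ≠ 0) (H : Matrix l m K) (S : Matrix m n K) (H' : Matrix n l K) :
    a⁻¹ • (H * (a • S) * H') = H * S * H' := by
  rw [Matrix.mul_smul, Matrix.smul_mul, inv_smul_smul₀ ha]

def scaleSecondBlock (m n : Type*) [DecidableEq m] [DecidableEq n] (c : ℝ) :
    Matrix (m ⊕ n) (m ⊕ n) ℂ :=
  fromBlocks 1 0 0 (c • 1)

section ScaleSecondBlock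

variable {m n : Type*} [Fintype m] [Fintype n] [DecidableEq m] [DecidableEq n]

lemma scaleSecondBlock_mul_fromBlocks_mul_conjTranspose (c : ℝ) (A : Matrix m m ℂ)
    (B : Matrix m n ℂ) (C : Matrix n m ℂ) (D : Matrix n n ℂ) :
    scaleSecondBlock m n c * fromBlocks A B C D * (scaleSecondBlock m n c)ᴴ =
      fromBlocks A (c • B) (c • C) ((c * c) • D) := by
  simp [scaleSecondBlock, fromBlocks_multiply, fromBlocks_conjTranspose, smul_smul]

lemma rTr_scaleSecondBlock_conj (c : ℝ) (A : Matrix m m ℂ) (B : Matrix m n ℂ)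
    (C : Matrix n m ℂ) (D : Matrix n n ℂ) :
    rTr (scaleSecondBlock m n c * fromBlocks A B C D * (scaleSecondBlock m n c)ᴴ) =
      rTr A + c ^ 2 * rTr D := by
  rw [scaleSecondBlock_mul_fromBlocks_mul_conjTranspose]
  simp [rTr, trace_fromBlocks, trace_smul, sq]

end ScaleSecondBlock

lemma Galpha_mul_scaleSecondBlock_sqrt {npt nct npr : ℕ} (Hpp : Mat npr npt)
    (Hcp : Mat npr nct) {α : ℝ} (hα : 0 < α) :
    Galpha Hpp Hcp α * scaleSecondBlock (Fin npt) (Fin nct) √α = Gmat Hpp Hcp := by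
  have hs : (√α : ℂ) ≠ 0 := by exact_mod_cast (Real.sqrt_pos.2 hα).ne'
  rw [Galpha, Gmat, scaleSecondBlock, fromCols_mul_fromBlocks]
  simp only [Matrix.mul_one, Matrix.mul_zero, add_zero, zero_add,
    Matrix.mul_smul, ← Complex.coe_smul, smul_inv_smul₀ hs]

theorem statement1_general {npt nct npr ncr : ℕ}
    (Hpp : Mat npr npt) (Hcp : Mat npr nct) (Hcc : Mat ncr nct)
    (Pp Pc : ℝ) (α : ℝ) (hα : 0 < α) :
    Rin Hpp Hcp Hcc Pp Pc ⊆ Rpart Hpp Hcp Hcc Pp Pc α := by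
  refine closure_mono (convexHull_mono ?_)
  rintro ⟨Rp, Rc⟩ ⟨hRp, hRc, Sp, Scp, Scc, Q, -, -, hScc, hSnet, hPp, hPc, hRp_le, hRc_le⟩
  have hαc : (α : ℂ) ≠ 0 := by exact_mod_cast hα.ne'
  set D := scaleSecondBlock (Fin npt) (Fin nct) √α
  refine ⟨hRp, hRc, D * fromBlocks Sp Q Qᴴ Scp * Dᴴ, (α : ℂ) • Scc,
    hSnet.mul_mul_conjTranspose_same D, hScc.smul (by exact_mod_cast hα.le), ?_, ?_, ?_⟩
  · have hscale : rTr ((α : ℂ) • Scc) = α * rTr Scc := by simp [rTr, trace_smul]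
    rw [rTr_scaleSecondBlock_conj, hscale, Real.sq_sqrt hα.le]
    nlinarith
  · have hG : Galpha Hpp Hcp α * (D * fromBlocks Sp Q Qᴴ Scp * Dᴴ) * (Galpha Hpp Hcp α)ᴴ =
        Gmat Hpp Hcp * fromBlocks Sp Q Qᴴ Scp * (Gmat Hpp Hcp)ᴴ := by
      rw [← Galpha_mul_scaleSecondBlock_sqrt Hpp Hcp hα, conjTranspose_mul]
      simp only [D, Matrix.mul_assoc]
    rwa [hG, inv_smul_mul_smul_mul_cancel hαc]
  · rwa [inv_smul_mul_smul_mul_cancel hαc]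

theorem statement1 {npt nct npr ncr : ℕ}
    (hnpt : 0 < npt) (hnct : 0 < nct) (hnpr : 0 < npr) (hncr : 0 < ncr)
    (Hpp : Mat npr npt) (Hcp : Mat npr nct) (Hcc : Mat ncr nct)
    (Pp Pc : ℝ) (hPp : 0 < Pp) (hPc : 0 < Pc) (α : ℝ) (hα : 0 < α) :
    Rin Hpp Hcp Hcc Pp Pc ⊆ Rpart Hpp Hcp Hcc Pp Pc α :=
  statement1_general Hpp Hcp Hcc Pp Pc α hα
end
end

section
/- (Lemma 6.1.) Fix μ > 0. Let M be the supremum (in the extended reals) of μ·R_p + R_c over all tuples x = (R_p, R_c, Σ_p, Σ_cp, Σ_cc, Q) in R_ach,rate that additionally satisfy Tr(Σ_p) ≤ P_p and Tr(Σ_cp) + Tr(Σ_cc) ≤ P_c, and let U be the supremum over all tuples x in R_ach,rate of inf over λ₁ ≥ 0, λ₂ ≥ 0 of L(x, λ₁, λ₂). Then M = U. -/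
open Matrix Filter
open scoped ComplexOrder

noncomputable section

/-! For a fixed tuple, the infimum of the Lagrangian over nonnegative multipliers is
`μ R_p + R_c` when both power constraints hold and `⊥` otherwise (a violated constraint lets its
multiplier drive `L` to `-∞`), so the two suprema range over the same values. -/

theorem biInf_nonneg_coe_sub_mul (v a : ℝ) :
    ⨅ l ∈ Set.Ici (0 : ℝ), ((v - l * a : ℝ) : EReal) = ⨆ _ : a ≤ 0, (v : EReal) := by
  by_cases ha : a ≤ 0
  · rw [iSup_pos ha]
    refine le_antisymm ((biInf_le _ Set.self_mem_Ici).trans_eq (by simp)) (le_iInf₂ fun l hl => ?_)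
    exact EReal.coe_le_coe_iff.mpr (by nlinarith [Set.mem_Ici.mp hl])
  · rw [iSup_neg ha, EReal.eq_bot_iff_forall_lt]
    replace ha := not_le.mp ha
    intro y
    have hl : (|v - y| + 1) / a ∈ Set.Ici (0 : ℝ) := Set.mem_Ici.mpr (by positivity)
    refine (biInf_le _ hl).trans_lt (EReal.coe_lt_coe_iff.mpr ?_)
    rw [div_mul_cancel₀ _ ha.ne']
    linarith [le_abs_self (v - y)]

theorem biInf_nonneg_coe_sub_mul_sub_mul (v a b : ℝ) :
    ⨅ l₁ ∈ Set.Ici (0 : ℝ), ⨅ l₂ ∈ Set.Ici (0 : ℝ), ((v - l₁ * a - l₂ * b : ℝ) : EReal) =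
      ⨆ _ : a ≤ 0 ∧ b ≤ 0, (v : EReal) := by
  simp only [biInf_nonneg_coe_sub_mul]
  by_cases hb : b ≤ 0
  · simp_rw [iSup_pos hb]
    rw [biInf_nonneg_coe_sub_mul, and_iff_left hb]
  · simp_rw [iSup_neg hb]
    rw [iSup_neg fun h => hb h.2]
    exact biInf_const Set.nonempty_Ici

theorem statement3_general {npt nct npr ncr : ℕ}
    (Hpp : Mat npr npt) (Hcp : Mat npr nct) (Hcc : Mat ncr nct)
    (Pp Pc : ℝ) (μ : ℝ) :
    (⨆ Rp : ℝ, ⨆ Rc : ℝ, ⨆ Sp : Mat npt npt, ⨆ Scp : Mat nct nct, ⨆ Scc : Mat nct nct,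
      ⨆ Q : Mat npt nct,
      ⨆ _ : RachRate Hpp Hcp Hcc Rp Rc Sp Scp Scc Q ∧
              rTr Sp ≤ Pp ∧ rTr Scp + rTr Scc ≤ Pc,
        ((μ * Rp + Rc : ℝ) : EReal)) =
    (⨆ Rp : ℝ, ⨆ Rc : ℝ, ⨆ Sp : Mat npt npt, ⨆ Scp : Mat nct nct, ⨆ Scc : Mat nct nct,
      ⨆ Q : Mat npt nct,
      ⨆ _ : RachRate Hpp Hcp Hcc Rp Rc Sp Scp Scc Q,
        ⨅ l1 ∈ Set.Ici (0 : ℝ), ⨅ l2 ∈ Set.Ici (0 : ℝ),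
          ((Lfun Pp Pc μ Rp Rc Sp Scp Scc l1 l2 : ℝ) : EReal)) := by
  simp only [Lfun, biInf_nonneg_coe_sub_mul_sub_mul, sub_nonpos, iSup_and]

theorem statement3 {npt nct npr ncr : ℕ}
    (hnpt : 0 < npt) (hnct : 0 < nct) (hnpr : 0 < npr) (hncr : 0 < ncr)
    (Hpp : Mat npr npt) (Hcp : Mat npr nct) (Hcc : Mat ncr nct)
    (Pp Pc : ℝ) (hPp : 0 < Pp) (hPc : 0 < Pc) (μ : ℝ) (hμ : 0 < μ) :
    (⨆ Rp : ℝ, ⨆ Rc : ℝ, ⨆ Sp : Mat npt npt, ⨆ Scp : Mat nct nct, ⨆ Scc : Mat nct nct,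
      ⨆ Q : Mat npt nct,
      ⨆ _ : RachRate Hpp Hcp Hcc Rp Rc Sp Scp Scc Q ∧
              rTr Sp ≤ Pp ∧ rTr Scp + rTr Scc ≤ Pc,
        ((μ * Rp + Rc : ℝ) : EReal)) =
    (⨆ Rp : ℝ, ⨆ Rc : ℝ, ⨆ Sp : Mat npt npt, ⨆ Scp : Mat nct nct, ⨆ Scc : Mat nct nct,
      ⨆ Q : Mat npt nct,
      ⨆ _ : RachRate Hpp Hcp Hcc Rp Rc Sp Scp Scc Q,
        ⨅ l1 ∈ Set.Ici (0 : ℝ), ⨅ l2 ∈ Set.Ici (0 : ℝ),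
          ((Lfun Pp Pc μ Rp Rc Sp Scp Scc l1 l2 : ℝ) : EReal)) :=
  statement3_general Hpp Hcp Hcc Pp Pc μ

end
end

section
/- (Lemma 6.5.) Fix μ > 0. The supremum over tuples x in R_ach,rate of the infimum over λ ≥ 0 and α ≥ 0 of L₁(x, λ, α) is less than or equal to the supremum over tuples x in R_ach,rate of the infimum over λ₁ ≥ 0 and λ₂ ≥ 0 of L(x, λ₁, λ₂) (both in the extended reals). -/
open Matrix Filter
open scoped ComplexOrder

noncomputable section

open Topology

/-! Substituting `λ = λ₁ + δ` and `α = λ₂ / λ` in `L₁` reproduces `L` up to the error term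
`δ (P_p - Tr Σ_p)`, which vanishes as `δ → 0⁺`. Hence, for every tuple, the infimum of `L₁` is at most
that of `L`, and the suprema compare accordingly. -/

lemma L1fun_div_eq_Lfun_add {npt nct : ℕ} (Pp Pc μ Rp Rc : ℝ) (Sp : Mat npt npt)
    (Scp Scc : Mat nct nct) (l1 l2 : ℝ) {l : ℝ} (hl : l ≠ 0) :
    L1fun Pp Pc μ Rp Rc Sp Scp Scc l (l2 / l) =
      Lfun Pp Pc μ Rp Rc Sp Scp Scc l1 l2 + (l - l1) * (Pp - rTr Sp) := by
  simp only [L1fun, Lfun]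
  field_simp
  ring

lemma iInf_L1fun_le_iInf_Lfun {npt nct : ℕ} (Pp Pc μ Rp Rc : ℝ) (Sp : Mat npt npt)
    (Scp Scc : Mat nct nct) :
    (⨅ l ∈ Set.Ici (0 : ℝ), ⨅ α ∈ Set.Ici (0 : ℝ),
        ((L1fun Pp Pc μ Rp Rc Sp Scp Scc l α : ℝ) : EReal)) ≤
      ⨅ l1 ∈ Set.Ici (0 : ℝ), ⨅ l2 ∈ Set.Ici (0 : ℝ),
        ((Lfun Pp Pc μ Rp Rc Sp Scp Scc l1 l2 : ℝ) : EReal) := by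
  refine le_iInf₂ fun l1 (hl1 : 0 ≤ l1) => le_iInf₂ fun l2 (hl2 : 0 ≤ l2) => ?_
  set L := Lfun Pp Pc μ Rp Rc Sp Scp Scc l1 l2
  have hlim : Tendsto (fun δ : ℝ => ((L + δ * (Pp - rTr Sp) : ℝ) : EReal)) (𝓝[>] 0) (𝓝 L) := by
    have hcont : Continuous fun δ : ℝ => ((L + δ * (Pp - rTr Sp) : ℝ) : EReal) :=
      continuous_coe_real_ereal.comp (by fun_prop)
    simpa using (hcont.tendsto 0).mono_left nhdsWithin_le_nhds
  refine ge_of_tendsto hlim (eventually_nhdsWithin_of_forall fun δ (hδ : 0 < δ) => ?_)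
  have hl : 0 < l1 + δ := by linarith
  refine iInf₂_le_of_le (l1 + δ) hl.le (iInf₂_le_of_le (l2 / (l1 + δ)) (div_nonneg hl2 hl.le) ?_)
  rw [L1fun_div_eq_Lfun_add Pp Pc μ Rp Rc Sp Scp Scc l1 l2 hl.ne', add_sub_cancel_left]

theorem statement5_general {npt nct npr ncr : ℕ}
    (Hpp : Mat npr npt) (Hcp : Mat npr nct) (Hcc : Mat ncr nct)
    (Pp Pc : ℝ) (μ : ℝ) :
    (⨆ Rp : ℝ, ⨆ Rc : ℝ, ⨆ Sp : Mat npt npt, ⨆ Scp : Mat nct nct, ⨆ Scc : Mat nct nct,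
      ⨆ Q : Mat npt nct,
      ⨆ _ : RachRate Hpp Hcp Hcc Rp Rc Sp Scp Scc Q,
        ⨅ l ∈ Set.Ici (0 : ℝ), ⨅ α ∈ Set.Ici (0 : ℝ),
          ((L1fun Pp Pc μ Rp Rc Sp Scp Scc l α : ℝ) : EReal)) ≤
    (⨆ Rp : ℝ, ⨆ Rc : ℝ, ⨆ Sp : Mat npt npt, ⨆ Scp : Mat nct nct, ⨆ Scc : Mat nct nct,
      ⨆ Q : Mat npt nct,
      ⨆ _ : RachRate Hpp Hcp Hcc Rp Rc Sp Scp Scc Q,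
        ⨅ l1 ∈ Set.Ici (0 : ℝ), ⨅ l2 ∈ Set.Ici (0 : ℝ),
          ((Lfun Pp Pc μ Rp Rc Sp Scp Scc l1 l2 : ℝ) : EReal)) :=
  iSup_mono fun Rp => iSup_mono fun Rc => iSup_mono fun Sp => iSup_mono fun Scp =>
    iSup_mono fun Scc => iSup_mono fun _ => iSup_mono fun _ =>
      iInf_L1fun_le_iInf_Lfun Pp Pc μ Rp Rc Sp Scp Scc

theorem statement5 {npt nct npr ncr : ℕ}
    (hnpt : 0 < npt) (hnct : 0 < nct) (hnpr : 0 < npr) (hncr : 0 < ncr)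
    (Hpp : Mat npr npt) (Hcp : Mat npr nct) (Hcc : Mat ncr nct)
    (Pp Pc : ℝ) (hPp : 0 < Pp) (hPc : 0 < Pc) (μ : ℝ) (hμ : 0 < μ) :
    (⨆ Rp : ℝ, ⨆ Rc : ℝ, ⨆ Sp : Mat npt npt, ⨆ Scp : Mat nct nct, ⨆ Scc : Mat nct nct,
      ⨆ Q : Mat npt nct,
      ⨆ _ : RachRate Hpp Hcp Hcc Rp Rc Sp Scp Scc Q,
        ⨅ l ∈ Set.Ici (0 : ℝ), ⨅ α ∈ Set.Ici (0 : ℝ),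
          ((L1fun Pp Pc μ Rp Rc Sp Scp Scc l α : ℝ) : EReal)) ≤
    (⨆ Rp : ℝ, ⨆ Rc : ℝ, ⨆ Sp : Mat npt npt, ⨆ Scp : Mat nct nct, ⨆ Scc : Mat nct nct,
      ⨆ Q : Mat npt nct,
      ⨆ _ : RachRate Hpp Hcp Hcc Rp Rc Sp Scp Scc Q,
        ⨅ l1 ∈ Set.Ici (0 : ℝ), ⨅ l2 ∈ Set.Ici (0 : ℝ),
          ((Lfun Pp Pc μ Rp Rc Sp Scp Scc l1 l2 : ℝ) : EReal)) :=
  statement5_general Hpp Hcp Hcc Pp Pc μ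

end
end

section
/- (Lemma 6.3, Ky Fan's minimax theorem.) Let X be a nonempty compact Hausdorff topological space and Y a nonempty set. Let f : X × Y → ℝ be such that for every y ∈ Y the map x ↦ f(x,y) is lower semicontinuous on X. Assume f is convexlike on X: for all x₁, x₂ ∈ X and all t ∈ [0,1] there exists x₀ ∈ X with f(x₀, y) ≤ t·f(x₁, y) + (1−t)·f(x₂, y) for every y ∈ Y; and concavelike on Y: for all y₁, y₂ ∈ Y and all t ∈ [0,1] there exists y₀ ∈ Y with f(x, y₀) ≥ t·f(x, y₁) + (1−t)·f(x, y₂) for every x ∈ X. Then inf over x ∈ X of sup over y ∈ Y of f(x,y) equals sup over y ∈ Y of inf over x ∈ X of f(x,y), where the suprema and infima are taken in the extended real numbers. -/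
open Matrix Filter
open scoped ComplexOrder

noncomputable section

/-- The epigraph of a real-valued lower semicontinuous function is closed. -/
lemma epigraph_closed_real {X : Type*} [TopologicalSpace X] {g : X → ℝ}
    (hg : LowerSemicontinuous g) : IsClosed {q : X × ℝ | g q.1 ≤ q.2} := by
  rw [← isOpen_compl_iff, isOpen_iff_mem_nhds]
  rintro ⟨x, r⟩ hq
  simp only [Set.mem_compl_iff, Set.mem_setOf_eq, not_le] at hq
  obtain ⟨m, hm1, hm2⟩ := exists_between hq
  have h1 : {x' | m < g x'} ∈ nhds x := hg x m hm2
  have h2 : Set.Iio m ∈ nhds r := Iio_mem_nhds hm1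
  rw [nhds_prod_eq]
  filter_upwards [Filter.prod_mem_prod h1 h2] with p hp
  simp only [Set.mem_compl_iff, Set.mem_setOf_eq, not_le]
  exact lt_trans hp.2 hp.1

/-- Iterated concavelike property: a convex combination of finitely many values of `f x ∘ g`
is dominated by `f x y₀` for some single `y₀`, uniformly in `x`. -/
lemma concave_combo {X Y : Type*} (f : X → Y → ℝ)
    (hconc : ∀ y₁ y₂ : Y, ∀ t ∈ Set.Icc (0 : ℝ) 1,
      ∃ y₀ : Y, ∀ x : X, t * f x y₁ + (1 - t) * f x y₂ ≤ f x y₀)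
    {ι : Type*} (s : Finset ι) (g : ι → Y) (μ : ι → ℝ)
    (hμ0 : ∀ i ∈ s, 0 ≤ μ i) (hμ1 : ∑ i ∈ s, μ i = 1) :
    ∃ y₀ : Y, ∀ x : X, ∑ i ∈ s, μ i * f x (g i) ≤ f x y₀ := by
  classical
  induction s using Finset.induction_on generalizing μ with
  | empty => simp at hμ1
  | @insert a s' ha ih =>
    rw [Finset.sum_insert ha] at hμ1
    have hμa0 : 0 ≤ μ a := hμ0 a (Finset.mem_insert_self a s')
    have hs0 : 0 ≤ ∑ i ∈ s', μ i :=
      Finset.sum_nonneg fun i hi => hμ0 i (Finset.mem_insert_of_mem hi)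
    by_cases h0 : ∑ i ∈ s', μ i = 0
    · have hall : ∀ i ∈ s', μ i = 0 :=
        (Finset.sum_eq_zero_iff_of_nonneg
          (fun i hi => hμ0 i (Finset.mem_insert_of_mem hi))).mp h0
      refine ⟨g a, fun x => ?_⟩
      rw [Finset.sum_insert ha]
      have hz : ∑ i ∈ s', μ i * f x (g i) = 0 :=
        Finset.sum_eq_zero fun i hi => by rw [hall i hi]; ring
      have hμa : μ a = 1 := by rw [h0] at hμ1; linarith
      rw [hz, hμa]; linarith
    · have hpos : 0 < ∑ i ∈ s', μ i := lt_of_le_of_ne hs0 (Ne.symm h0)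
      set T := ∑ i ∈ s', μ i with hTdef
      have hTne : T ≠ 0 := ne_of_gt hpos
      obtain ⟨y₁, hy₁⟩ := ih (fun i => μ i / T)
        (fun i hi => div_nonneg (hμ0 i (Finset.mem_insert_of_mem hi)) hpos.le)
        (by rw [← Finset.sum_div]; exact div_self hTne)
      obtain ⟨y₀, hy₀⟩ := hconc (g a) y₁ (μ a) ⟨hμa0, by linarith⟩
      refine ⟨y₀, fun x => ?_⟩
      have h1 := hy₁ x
      have h2 := hy₀ x
      rw [Finset.sum_insert ha]
      have heq : ∑ i ∈ s', μ i * f x (g i) = T * ∑ i ∈ s', μ i / T * f x (g i) := by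
        rw [Finset.mul_sum]
        refine Finset.sum_congr rfl fun i hi => ?_
        field_simp
      have h3 : T * ∑ i ∈ s', μ i / T * f x (g i) ≤ T * f x y₁ :=
        mul_le_mul_of_nonneg_left h1 hpos.le
      have hT1 : T = 1 - μ a := by linarith
      rw [heq]
      rw [hT1] at h3 ⊢
      linarith

theorem statement6 {X : Type*} [TopologicalSpace X] [CompactSpace X] [T2Space X] [Nonempty X]
    {Y : Type*} [Nonempty Y] (f : X → Y → ℝ)
    (hlsc : ∀ y : Y, LowerSemicontinuous fun x => f x y)
    (hconv : ∀ x₁ x₂ : X, ∀ t ∈ Set.Icc (0 : ℝ) 1,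
      ∃ x₀ : X, ∀ y : Y, f x₀ y ≤ t * f x₁ y + (1 - t) * f x₂ y)
    (hconc : ∀ y₁ y₂ : Y, ∀ t ∈ Set.Icc (0 : ℝ) 1,
      ∃ y₀ : Y, ∀ x : X, t * f x y₁ + (1 - t) * f x y₂ ≤ f x y₀) :
    (⨅ x : X, ⨆ y : Y, ((f x y : ℝ) : EReal)) =
      ⨆ y : Y, ⨅ x : X, ((f x y : ℝ) : EReal) := by
  classical
  refine le_antisymm ?_ (iSup_iInf_le_iInf_iSup fun y x => ((f x y : ℝ) : EReal))
  set β : EReal := ⨆ y : Y, ⨅ x : X, ((f x y : ℝ) : EReal) with hβ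
  -- key claim: for every real c > β, there is x with f x y ≤ c for all y.
  have key : ∀ c : ℝ, β < (c : EReal) → ∃ x : X, ∀ y : Y, f x y ≤ c := by
    intro c hc
    -- finite intersection step, by separation
    have fin : ∀ t : Finset Y, ∃ x : X, ∀ y ∈ t, f x y ≤ c := by
      intro t
      by_contra hne
      push_neg at hne
      set E : Set (X × (↥t → ℝ)) := {p | ∀ i : ↥t, f p.1 ↑i ≤ p.2 i} with hE
      have hEclosed : IsClosed E := by
        have hEeq : E = ⋂ i : ↥t, {p : X × (↥t → ℝ) | f p.1 ↑i ≤ p.2 i} := by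
          ext p; simp [hE, Set.mem_iInter]
        rw [hEeq]
        refine isClosed_iInter fun i => ?_
        have h1 : IsClosed {q : X × ℝ | f q.1 ↑i ≤ q.2} :=
          epigraph_closed_real (hlsc ↑i)
        have h2 : Continuous fun p : X × (↥t → ℝ) => (p.1, p.2 i) :=
          continuous_fst.prodMk ((continuous_apply i).comp continuous_snd)
        exact h1.preimage h2
      set D : Set (↥t → ℝ) := Prod.snd '' E with hD
      have hDmem : ∀ v : ↥t → ℝ, v ∈ D ↔ ∃ x : X, ∀ i : ↥t, f x ↑i ≤ v i := by
        intro v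
        constructor
        · rintro ⟨⟨x, w⟩, hp, rfl⟩; exact ⟨x, hp⟩
        · rintro ⟨x, hx⟩; exact ⟨(x, v), hx, rfl⟩
      have hDclosed : IsClosed D := isClosedMap_snd_of_compactSpace E hEclosed
      have hDconvex : Convex ℝ D := by
        rintro v₁ hv₁ v₂ hv₂ a b ha hb hab
        obtain ⟨x₁, hx₁⟩ := (hDmem v₁).mp hv₁
        obtain ⟨x₂, hx₂⟩ := (hDmem v₂).mp hv₂
        obtain ⟨x₀, hx₀⟩ := hconv x₁ x₂ a ⟨ha, by linarith⟩
        refine (hDmem _).mpr ⟨x₀, fun i => ?_⟩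
        have h1 := hx₀ ↑i
        have h2 := mul_le_mul_of_nonneg_left (hx₁ i) ha
        have h3 := mul_le_mul_of_nonneg_left (hx₂ i) (by linarith : (0:ℝ) ≤ 1 - a)
        have hb' : b = 1 - a := by linarith
        simp only [Pi.add_apply, Pi.smul_apply, smul_eq_mul]
        rw [hb']
        linarith
      have hc1 : (fun _ : ↥t => c) ∉ D := by
        intro hmem
        obtain ⟨x, hx⟩ := (hDmem _).mp hmem
        obtain ⟨y, hyt, hy⟩ := hne x
        exact absurd (hx ⟨y, hyt⟩) (not_le.mpr hy)
      obtain ⟨φ, u, hu1, hu2⟩ := geometric_hahn_banach_point_closed hDconvex hDclosed hc1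
      set lam : ↥t → ℝ := fun i => φ (Pi.single i (1:ℝ) : ↥t → ℝ) with hlam
      have hrep : ∀ v : ↥t → ℝ, φ v = ∑ i : ↥t, v i * lam i := by
        intro v
        have hv : v = ∑ i : ↥t, v i • (Pi.single i (1:ℝ) : ↥t → ℝ) := by
          ext j
          rw [Finset.sum_apply]
          simp [Pi.single_apply]
        calc φ v = φ (∑ i : ↥t, v i • (Pi.single i (1:ℝ) : ↥t → ℝ)) := by rw [← hv]
          _ = ∑ i : ↥t, v i • φ (Pi.single i (1:ℝ) : ↥t → ℝ) := by
              rw [map_sum]; exact Finset.sum_congr rfl fun i _ => by rw [_root_.map_smul]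
          _ = ∑ i : ↥t, v i * lam i := by simp [hlam, smul_eq_mul]
      obtain ⟨x₀⟩ := ‹Nonempty X›
      have hv₀ : (fun i : ↥t => f x₀ ↑i) ∈ D := (hDmem _).mpr ⟨x₀, fun i => le_rfl⟩
      have hlam0 : ∀ i, 0 ≤ lam i := by
        intro i
        by_contra hneg
        push_neg at hneg
        set s : ℝ := (φ (fun i : ↥t => f x₀ ↑i) - u + 1) / (-lam i) with hs
        have hA : u < φ (fun i : ↥t => f x₀ ↑i) := hu2 _ hv₀
        have hs0 : 0 ≤ s := div_nonneg (by linarith) (by linarith)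
        have hmem : ((fun j : ↥t => f x₀ ↑j) + s • (Pi.single i (1:ℝ) : ↥t → ℝ)) ∈ D := by
          refine (hDmem _).mpr ⟨x₀, fun j => ?_⟩
          simp only [Pi.add_apply, Pi.smul_apply, smul_eq_mul]
          have hnn : (0:ℝ) ≤ s * (Pi.single i (1:ℝ) : ↥t → ℝ) j := by
            apply mul_nonneg hs0
            rw [Pi.single_apply]
            split <;> norm_num
          linarith
        have hgt := hu2 _ hmem
        rw [_root_.map_add, _root_.map_smul] at hgt
        have hlamne : lam i ≠ 0 := ne_of_lt hneg
        have hcomp : s * lam i = -(φ (fun i : ↥t => f x₀ ↑i) - u + 1) := by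
          rw [hs, div_mul_eq_mul_div, mul_div_assoc, div_neg, div_self hlamne]
          ring
        have hφ : φ (Pi.single i (1:ℝ) : ↥t → ℝ) = lam i := rfl
        simp only [smul_eq_mul] at hgt
        rw [hφ] at hgt
        linarith
      have hT0 : 0 ≤ ∑ i : ↥t, lam i := Finset.sum_nonneg fun i _ => hlam0 i
      have hTpos : 0 < ∑ i : ↥t, lam i := by
        rcases eq_or_lt_of_le hT0 with h | h
        · exfalso
          have hall : ∀ i ∈ Finset.univ, lam i = 0 :=
            (Finset.sum_eq_zero_iff_of_nonneg (fun i _ => hlam0 i)).mp h.symm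
          have h1 : φ (fun _ : ↥t => c) = 0 := by
            rw [hrep]
            exact Finset.sum_eq_zero fun i hi => by rw [hall i (Finset.mem_univ i)]; ring
          have h2 : φ (fun i : ↥t => f x₀ ↑i) = 0 := by
            rw [hrep]
            exact Finset.sum_eq_zero fun i hi => by rw [hall i (Finset.mem_univ i)]; ring
          have h3 := hu2 _ hv₀
          linarith
        · exact h
      set T : ℝ := ∑ i : ↥t, lam i with hT
      have hsep : ∀ x : X, c < ∑ i : ↥t, lam i / T * f x ↑i := by
        intro x
        have hvx : (fun i : ↥t => f x ↑i) ∈ D := (hDmem _).mpr ⟨x, fun i => le_rfl⟩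
        have h1 := hu2 _ hvx
        rw [hrep] at h1
        have h2 : φ (fun _ : ↥t => c) = c * T := by
          rw [hrep, hT, Finset.mul_sum]
        have h3 : c * T < ∑ i : ↥t, f x ↑i * lam i := by
          rw [h2] at hu1; linarith
        have h4 : ∑ i : ↥t, lam i / T * f x ↑i = (∑ i : ↥t, f x ↑i * lam i) / T := by
          rw [Finset.sum_div]
          exact Finset.sum_congr rfl fun i _ => by ring
        rw [h4, lt_div_iff₀ hTpos]
        linarith
      obtain ⟨y₀, hy₀⟩ := concave_combo f hconc Finset.univ (fun i : ↥t => (↑i : Y))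
        (fun i => lam i / T)
        (fun i _ => div_nonneg (hlam0 i) hTpos.le)
        (by rw [← Finset.sum_div]; exact div_self hTpos.ne')
      have hy : ∀ x : X, c < f x y₀ := fun x => lt_of_lt_of_le (hsep x) (hy₀ x)
      have hle : (c : EReal) ≤ β := by
        refine le_trans ?_ (le_iSup (fun y => ⨅ x : X, ((f x y : ℝ) : EReal)) y₀)
        exact le_iInf fun x => EReal.coe_le_coe_iff.mpr (hy x).le
      exact absurd hle (not_le.mpr hc)
    -- compactness: pass from finite subfamilies to the whole family
    by_contra hno
    push_neg at hno
    set K : Y → Set X := fun y => {x | f x y ≤ c} with hK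
    have hKclosed : ∀ y, IsClosed (K y) := fun y => (hlsc y).isClosed_preimage c
    have hint : (Set.univ : Set X) ∩ ⋂ y : Y, K y = ∅ := by
      rw [Set.eq_empty_iff_forall_notMem]
      intro x hx
      obtain ⟨y, hy⟩ := hno x
      exact absurd (Set.mem_iInter.mp hx.2 y) (not_le.mpr hy)
    obtain ⟨t, ht⟩ := isCompact_univ.elim_finite_subfamily_closed K hKclosed hint
    obtain ⟨x, hx⟩ := fin t
    have hmem : x ∈ (Set.univ : Set X) ∩ ⋂ y ∈ t, K y :=
      ⟨trivial, Set.mem_iInter₂.mpr fun y hy => hx y hy⟩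
    rw [ht] at hmem
    exact hmem
  refine le_of_forall_gt_imp_ge_of_dense fun c' hc' => ?_
  obtain ⟨c, hc1, hc2⟩ := EReal.exists_between_coe_real hc'
  obtain ⟨x, hx⟩ := key c hc1
  calc (⨅ x : X, ⨆ y : Y, ((f x y : ℝ) : EReal))
      ≤ ⨆ y : Y, ((f x y : ℝ) : EReal) := iInf_le _ x
    _ ≤ (c : EReal) := iSup_le fun y => EReal.coe_le_coe_iff.mpr (hx y)
    _ ≤ c' := hc2.le

end
end

section
/- (Lemma 6.2, behavior as α → 0.) Assume H_cc ≠ 0, and fix any real μ. For every α > 0 one has h(α) ≥ logdet(I + ((P_p + α·P_c)/(α·n_ct))·H_cc H_cc†), and consequently h(α) tends to +∞ as α tends to 0 from the right. -/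
open Matrix Filter
open scoped ComplexOrder

noncomputable section

/-! Taking `Q_p = 0` and the isotropic `Σ_cc = (P_p + α P_c)/n_ct · I`, which spends the whole power
budget, puts `(0, logdet (I + c H_cc H_cc†))` with `c = (P_p + α P_c)/(α n_ct)` into
`R_part,out^α`; this is the lower bound on `h(α)`. In terms of the eigenvalues `λ_i ≥ 0` of
`H_cc H_cc†` that log-determinant is `∑ log (1 + c λ_i) ≥ log (1 + c λ_j)` for some `λ_j > 0`
(as `H_cc ≠ 0`), and `c → ∞` as `α → 0⁺`. -/

namespace Matrix

variable {𝕜 ι : Type*} [RCLike 𝕜] [Fintype ι] [DecidableEq ι]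

theorem IsHermitian.det_one_add_smul {A : Matrix ι ι 𝕜} (hA : A.IsHermitian) (c : ℝ) :
    (1 + (c : 𝕜) • A).det = ((∏ i, (1 + c * hA.eigenvalues i) : ℝ) : 𝕜) := by
  set U : Matrix ι ι 𝕜 := (hA.eigenvectorUnitary : Matrix ι ι 𝕜)
  have hU : U * star U = 1 := Matrix.mem_unitaryGroup_iff.mp hA.eigenvectorUnitary.2
  have hdiag : 1 + (c : 𝕜) • A
      = U * diagonal (fun i => ((1 + c * hA.eigenvalues i : ℝ) : 𝕜)) * star U := by
    have hD : diagonal (fun i => ((1 + c * hA.eigenvalues i : ℝ) : 𝕜))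
        = 1 + (c : 𝕜) • diagonal (RCLike.ofReal ∘ hA.eigenvalues) := by
      ext i j
      rcases eq_or_ne i j with rfl | hij <;> simp [*]
    conv_lhs => rw [hA.spectral_theorem, Unitary.conjStarAlgAut_apply]
    rw [hD, mul_add, add_mul, mul_one, hU, mul_smul_comm, smul_mul_assoc]
  rw [hdiag, det_mul_right_comm, hU, one_mul, det_diagonal, RCLike.ofReal_prod]

end Matrix

open Matrix

section LogDet

variable {ι : Type*} [Fintype ι] [DecidableEq ι]

theorem LD_smul_eq_sum_log {A : Matrix ι ι ℂ} (hA : A.PosSemidef) {c : ℝ} (hc : 0 ≤ c) :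
    LD ((c : ℂ) • A) = ∑ i, Real.log (1 + c * hA.1.eigenvalues i) := by
  unfold LD
  rw [show (1 + (c : ℂ) • A).det = ((∏ i, (1 + c * hA.1.eigenvalues i) : ℝ) : ℂ) from
    hA.1.det_one_add_smul c, Complex.ofReal_re]
  exact Real.log_prod fun i _ => by nlinarith [hA.eigenvalues_nonneg i]

theorem LD_smul_nonneg {A : Matrix ι ι ℂ} (hA : A.PosSemidef) {c : ℝ} (hc : 0 ≤ c) :
    0 ≤ LD ((c : ℂ) • A) := by
  rw [LD_smul_eq_sum_log hA hc]
  exact Finset.sum_nonneg fun i _ =>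
    Real.log_nonneg (by nlinarith [hA.eigenvalues_nonneg i])

theorem log_one_add_mul_eigenvalue_le_LD_smul {A : Matrix ι ι ℂ} (hA : A.PosSemidef) {c : ℝ}
    (hc : 0 ≤ c) (j : ι) :
    Real.log (1 + c * hA.1.eigenvalues j) ≤ LD ((c : ℂ) • A) := by
  rw [LD_smul_eq_sum_log hA hc]
  exact Finset.single_le_sum (f := fun i => Real.log (1 + c * hA.1.eigenvalues i))
    (fun i _ => Real.log_nonneg (by nlinarith [hA.eigenvalues_nonneg i])) (Finset.mem_univ j)

theorem tendsto_LD_smul_atTop {α : Type*} {l : Filter α} {A : Matrix ι ι ℂ} (hA : A.PosSemidef)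
    (hA0 : A ≠ 0) {c : α → ℝ} (hc : Tendsto c l atTop) :
    Tendsto (fun t => LD ((c t : ℂ) • A)) l atTop := by
  obtain ⟨j, hj⟩ : ∃ j, 0 < hA.1.eigenvalues j := by
    by_contra! h
    exact hA0 (hA.1.eigenvalues_eq_zero_iff.mp
      (funext fun j => le_antisymm (h j) (hA.eigenvalues_nonneg j)))
  have hlog : Tendsto (fun t => Real.log (1 + c t * hA.1.eigenvalues j)) l atTop :=
    Real.tendsto_log_atTop.comp (tendsto_atTop_add_const_left _ 1 (hc.atTop_mul_const hj))
  refine tendsto_atTop_mono' l ?_ hlog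
  filter_upwards [hc.eventually_ge_atTop 0] with t ht
  exact log_one_add_mul_eigenvalue_le_LD_smul hA ht j

end LogDet

theorem tendsto_add_mul_div_mul_nhdsGT_zero_atTop {a b n : ℝ} (ha : 0 < a) (hn : 0 < n) :
    Tendsto (fun α : ℝ => (a + α * b) / (α * n)) (nhdsWithin 0 (Set.Ioi 0)) atTop := by
  have hnum : Tendsto (fun α : ℝ => (a + α * b) / n) (nhdsWithin 0 (Set.Ioi 0)) (nhds (a / n)) := by
    have hcont : Continuous fun α : ℝ => (a + α * b) / n := by fun_prop
    simpa using (hcont.tendsto 0).mono_left nhdsWithin_le_nhds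
  refine (hnum.pos_mul_atTop (div_pos ha hn) tendsto_inv_nhdsGT_zero).congr fun α => ?_
  ring

theorem isotropic_point_mem_Rpart {npt nct npr ncr : ℕ} (Hpp : Mat npr npt) (Hcp : Mat npr nct)
    (Hcc : Mat ncr nct) {Pp Pc α : ℝ} (hα : 0 < α) (hP : 0 ≤ Pp + α * Pc) :
    ((0 : ℝ), LD ((((Pp + α * Pc) / (α * nct) : ℝ) : ℂ) • (Hcc * Hccᴴ)))
      ∈ Rpart Hpp Hcp Hcc Pp Pc α := by
  set c : ℝ := (Pp + α * Pc) / nct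
  have hc : 0 ≤ c := by positivity
  have hpower : rTr (0 : Matrix (Fin npt ⊕ Fin nct) (Fin npt ⊕ Fin nct) ℂ)
      + rTr ((c : ℂ) • (1 : Mat nct nct)) ≤ Pp + α * Pc := by
    have htr : rTr ((c : ℂ) • (1 : Mat nct nct)) = c * nct := by
      simp [rTr, Matrix.trace_smul, Matrix.trace_one]
    rw [htr, rTr, trace_zero, Complex.zero_re, zero_add]
    obtain rfl | hn := Nat.eq_zero_or_pos nct
    · simpa using hP
    · rw [div_mul_cancel₀ _ (by positivity)]
  have hrate : ((α : ℂ))⁻¹ • (Hcc * ((c : ℂ) • (1 : Mat nct nct)) * Hccᴴ)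
      = (((Pp + α * Pc) / (α * nct) : ℝ) : ℂ) • (Hcc * Hccᴴ) := by
    rw [Matrix.mul_smul, Matrix.mul_one, Matrix.smul_mul, smul_smul]
    congr 1
    simp only [c]
    push_cast
    ring
  refine subset_closure (subset_convexHull ℝ _ ⟨le_rfl, LD_smul_nonneg
    (posSemidef_self_mul_conjTranspose Hcc) (by positivity), 0, (c : ℂ) • 1, PosSemidef.zero,
    PosSemidef.one.smul (Complex.zero_le_real.mpr hc), hpower, ?_, (congrArg LD hrate).ge⟩)
  simp

theorem statement7_general {npt nct npr ncr : ℕ}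
    (Hpp : Mat npr npt) (Hcp : Mat npr nct) (Hcc : Mat ncr nct) (hHcc : Hcc ≠ 0)
    (Pp Pc : ℝ) (hPp : 0 < Pp) (hPc : 0 < Pc) (μ : ℝ) :
    (∀ α : ℝ, 0 < α →
      ((LD (((((Pp + α * Pc) / (α * nct) : ℝ)) : ℂ) • (Hcc * Hccᴴ)) : ℝ) : EReal) ≤
        ⨆ R ∈ Rpart Hpp Hcp Hcc Pp Pc α, ((μ * R.1 + R.2 : ℝ) : EReal))
    ∧
    Tendsto (fun α : ℝ => ⨆ R ∈ Rpart Hpp Hcp Hcc Pp Pc α, ((μ * R.1 + R.2 : ℝ) : EReal))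
      (nhdsWithin 0 (Set.Ioi 0)) (nhds (⊤ : EReal)) := by
  have hbound : ∀ α : ℝ, 0 < α →
      ((LD (((((Pp + α * Pc) / (α * nct) : ℝ)) : ℂ) • (Hcc * Hccᴴ)) : ℝ) : EReal) ≤
        ⨆ R ∈ Rpart Hpp Hcp Hcc Pp Pc α, ((μ * R.1 + R.2 : ℝ) : EReal) := fun α hα => by
    have hmem := isotropic_point_mem_Rpart Hpp Hcp Hcc hα (Pc := Pc) (by positivity)
    simpa using le_iSup₂ (f := fun R (_ : R ∈ Rpart Hpp Hcp Hcc Pp Pc α) =>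
      ((μ * R.1 + R.2 : ℝ) : EReal)) _ hmem
  refine ⟨hbound, ?_⟩
  have hnct : (0 : ℝ) < nct := Nat.cast_pos.mpr <| Nat.pos_of_ne_zero <| by
    rintro rfl
    exact hHcc (Subsingleton.elim _ _)
  have hLD := tendsto_LD_smul_atTop (posSemidef_self_mul_conjTranspose Hcc)
    (mt self_mul_conjTranspose_eq_zero.mp hHcc)
    (tendsto_add_mul_div_mul_nhdsGT_zero_atTop (b := Pc) hPp hnct)
  refine tendsto_nhds_top_mono (EReal.tendsto_coe_atTop.comp hLD) ?_
  filter_upwards [self_mem_nhdsWithin] with α hα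
  exact hbound α hα

theorem statement7 {npt nct npr ncr : ℕ}
    (hnpt : 0 < npt) (hnct : 0 < nct) (hnpr : 0 < npr) (hncr : 0 < ncr)
    (Hpp : Mat npr npt) (Hcp : Mat npr nct) (Hcc : Mat ncr nct) (hHcc : Hcc ≠ 0)
    (Pp Pc : ℝ) (hPp : 0 < Pp) (hPc : 0 < Pc) (μ : ℝ) :
    (∀ α : ℝ, 0 < α →
      ((LD (((((Pp + α * Pc) / (α * nct) : ℝ)) : ℂ) • (Hcc * Hccᴴ)) : ℝ) : EReal) ≤
        ⨆ R ∈ Rpart Hpp Hcp Hcc Pp Pc α, ((μ * R.1 + R.2 : ℝ) : EReal))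
    ∧
    Tendsto (fun α : ℝ => ⨆ R ∈ Rpart Hpp Hcp Hcc Pp Pc α, ((μ * R.1 + R.2 : ℝ) : EReal))
      (nhdsWithin 0 (Set.Ioi 0)) (nhds (⊤ : EReal)) :=
  statement7_general Hpp Hcp Hcc hHcc Pp Pc hPp hPc μ

end
end

section
/- (Lemma 6.2, behavior as α → ∞.) Assume H_pp ≠ 0, and fix μ > 0. For every α > 0 one has h(α) ≥ μ·logdet(I + ((P_p + α·P_c)/n_pt)·H_pp H_pp†), and consequently h(α) tends to +∞ as α tends to +∞. -/
open Matrix Filter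
open scoped ComplexOrder

noncomputable section

/-!
Spending the whole power budget isotropically on the primary transmitter's own antennas,
`Q_p = c · diag(I, 0)` with `c = (P_p + α P_c) / n_pt`, and setting `Σ_cc = 0`, gives
`G_α Q_p G_α† = c H_pp H_pp†`, so `(logdet (I + c H_pp H_pp†), 0)` lies in `R_part,out^α`.
Diagonalising `H_pp H_pp†`, this log-determinant is `∑ᵢ log (1 + c λᵢ) ≥ log (1 + c λ)` for an
eigenvalue `λ > 0`, which exists because `H_pp ≠ 0`; as `c → ∞` with `α`, so does `h(α)`.
-/

theorem Matrix.IsHermitian.det_one_add_smul_s8 {ι : Type*} [Fintype ι] [DecidableEq ι]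
    {M : Matrix ι ι ℂ} (hM : M.IsHermitian) (c : ℝ) :
    (1 + (c : ℂ) • M).det = ∏ i, ((1 + c * hM.eigenvalues i : ℝ) : ℂ) := by
  have hD : diagonal (fun i ↦ ((1 + c * hM.eigenvalues i : ℝ) : ℂ))
      = 1 + (c : ℂ) • diagonal (RCLike.ofReal ∘ hM.eigenvalues) := by
    ext i j
    by_cases h : i = j <;> simp [h]
  have hdiag : 1 + (c : ℂ) • M
      = (hM.eigenvectorUnitary : Matrix ι ι ℂ)
        * diagonal (fun i ↦ ((1 + c * hM.eigenvalues i : ℝ) : ℂ))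
        * star (hM.eigenvectorUnitary : Matrix ι ι ℂ) := by
    conv_lhs => rw [hM.spectral_theorem, Unitary.conjStarAlgAut_apply]
    rw [hD, Matrix.mul_add, Matrix.add_mul, Matrix.mul_one, ← Unitary.coe_star,
      Unitary.coe_mul_star_self, Matrix.mul_smul, Matrix.smul_mul]
  rw [hdiag, det_mul_comm, ← Matrix.mul_assoc, Unitary.coe_star_mul_self, Matrix.one_mul,
    det_diagonal]

@[simp]
theorem LD_zero {ι : Type*} [Fintype ι] [DecidableEq ι] : LD (0 : Matrix ι ι ℂ) = 0 := by
  simp [LD]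

theorem LD_smul_eq_log_prod {ι : Type*} [Fintype ι] [DecidableEq ι] {M : Matrix ι ι ℂ}
    (hM : M.IsHermitian) (c : ℝ) :
    LD ((c : ℂ) • M) = Real.log (∏ i, (1 + c * hM.eigenvalues i)) := by
  rw [LD, hM.det_one_add_smul_s8, ← Complex.ofReal_prod, Complex.ofReal_re]

namespace Matrix.PosSemidef

variable {ι : Type*} [Fintype ι] [DecidableEq ι] {M : Matrix ι ι ℂ}

theorem one_le_one_add_mul_eigenvalues (hM : M.PosSemidef) {c : ℝ} (hc : 0 ≤ c) (i : ι) :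
    1 ≤ 1 + c * hM.isHermitian.eigenvalues i :=
  le_add_of_nonneg_right (mul_nonneg hc (hM.eigenvalues_nonneg i))

theorem LD_smul_nonneg (hM : M.PosSemidef) {c : ℝ} (hc : 0 ≤ c) :
    0 ≤ LD ((c : ℂ) • M) := by
  rw [LD_smul_eq_log_prod hM.isHermitian]
  exact Real.log_nonneg (Finset.one_le_prod fun i _ ↦ hM.one_le_one_add_mul_eigenvalues hc i)

theorem log_one_add_mul_eigenvalues_le_LD_smul (hM : M.PosSemidef) {c : ℝ} (hc : 0 ≤ c)
    (i : ι) : Real.log (1 + c * hM.isHermitian.eigenvalues i) ≤ LD ((c : ℂ) • M) := by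
  have hfac := hM.one_le_one_add_mul_eigenvalues hc
  rw [LD_smul_eq_log_prod hM.isHermitian]
  refine Real.log_le_log (by linarith [hfac i]) ?_
  simpa using Finset.prod_le_prod_of_subset_of_one_le (Finset.subset_univ {i})
    (by simpa using by linarith [hfac i]) (fun j _ _ ↦ hfac j)

theorem exists_eigenvalues_pos (hM : M.PosSemidef) (hM0 : M ≠ 0) :
    ∃ i, 0 < hM.isHermitian.eigenvalues i := by
  by_contra! h
  exact hM0 (hM.isHermitian.eigenvalues_eq_zero_iff.mp
    (funext fun i ↦ le_antisymm (h i) (hM.eigenvalues_nonneg i)))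

end Matrix.PosSemidef

theorem Galpha_mul_conjTranspose_fromCols_one_zero {npt nct npr : ℕ} (Hpp : Mat npr npt)
    (Hcp : Mat npr nct) (α : ℝ) :
    Galpha Hpp Hcp α * (fromCols (1 : Mat npt npt) (0 : Mat npt nct))ᴴ = Hpp := by
  simp [Galpha, conjTranspose_fromCols_eq_fromRows_conjTranspose, fromCols_mul_fromRows]

theorem LD_smul_zero_mem_Rpart {npt nct npr ncr : ℕ} (Hpp : Mat npr npt) (Hcp : Mat npr nct)
    (Hcc : Mat ncr nct) {Pp Pc α c : ℝ} (hc : 0 ≤ c) (hpow : c * npt ≤ Pp + α * Pc) :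
    (LD ((c : ℂ) • (Hpp * Hppᴴ)), 0) ∈ Rpart Hpp Hcp Hcc Pp Pc α := by
  set E : Matrix (Fin npt) (Fin npt ⊕ Fin nct) ℂ := fromCols 1 0
  have hEE : E * Eᴴ = 1 := by
    simp [E, conjTranspose_fromCols_eq_fromRows_conjTranspose, fromCols_mul_fromRows]
  have hGE := Galpha_mul_conjTranspose_fromCols_one_zero Hpp Hcp α
  have hEG : E * (Galpha Hpp Hcp α)ᴴ = Hppᴴ := by
    rw [← conjTranspose_conjTranspose E, ← conjTranspose_mul, hGE]
  have hGQG : Galpha Hpp Hcp α * ((c : ℂ) • (Eᴴ * E)) * (Galpha Hpp Hcp α)ᴴ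
      = (c : ℂ) • (Hpp * Hppᴴ) := by
    rw [Matrix.mul_smul, Matrix.smul_mul, ← Matrix.mul_assoc, hGE, Matrix.mul_assoc, hEG]
  refine subset_closure (subset_convexHull ℝ _
    ⟨(posSemidef_self_mul_conjTranspose Hpp).LD_smul_nonneg hc, le_rfl, (c : ℂ) • (Eᴴ * E), 0,
      (posSemidef_conjTranspose_mul_self E).smul (by exact_mod_cast hc), .zero, ?_, ?_, ?_⟩)
  · simpa [rTr, trace_mul_comm Eᴴ, hEE] using hpow
  · simp only [hGQG, Matrix.mul_zero, Matrix.zero_mul, smul_zero, add_zero, LD_zero, sub_zero,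
      le_refl]
  · simp

theorem mul_LD_smul_le_iSup_Rpart {npt nct npr ncr : ℕ} (Hpp : Mat npr npt)
    (Hcp : Mat npr nct) (Hcc : Mat ncr nct) {Pp Pc α c : ℝ} (hc : 0 ≤ c)
    (hpow : c * npt ≤ Pp + α * Pc) (μ : ℝ) :
    ((μ * LD ((c : ℂ) • (Hpp * Hppᴴ)) : ℝ) : EReal) ≤
      ⨆ R ∈ Rpart Hpp Hcp Hcc Pp Pc α, ((μ * R.1 + R.2 : ℝ) : EReal) := by
  simpa using le_biSup (fun R : ℝ × ℝ ↦ ((μ * R.1 + R.2 : ℝ) : EReal))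
    (LD_smul_zero_mem_Rpart Hpp Hcp Hcc hc hpow)

theorem statement8_general {npt nct npr ncr : ℕ}
    (hnpt : 0 < npt)
    (Hpp : Mat npr npt) (hHpp : Hpp ≠ 0) (Hcp : Mat npr nct) (Hcc : Mat ncr nct)
    (Pp Pc : ℝ) (hPp : 0 < Pp) (hPc : 0 < Pc) (μ : ℝ) (hμ : 0 < μ) :
    (∀ α : ℝ, 0 < α →
      ((μ * LD (((((Pp + α * Pc) / npt : ℝ)) : ℂ) • (Hpp * Hppᴴ)) : ℝ) : EReal) ≤
        ⨆ R ∈ Rpart Hpp Hcp Hcc Pp Pc α, ((μ * R.1 + R.2 : ℝ) : EReal))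
    ∧
    Tendsto (fun α : ℝ => ⨆ R ∈ Rpart Hpp Hcp Hcc Pp Pc α, ((μ * R.1 + R.2 : ℝ) : EReal))
      atTop (nhds (⊤ : EReal)) := by
  set c : ℝ → ℝ := fun α ↦ (Pp + α * Pc) / npt
  have hc : ∀ α : ℝ, 0 < α → 0 ≤ c α := fun α hα ↦ by positivity
  have hbound (α : ℝ) (hα : 0 < α) := mul_LD_smul_le_iSup_Rpart Hpp Hcp Hcc (hc α hα)
    (div_mul_cancel₀ _ (by positivity : (npt : ℝ) ≠ 0)).le μ
  refine ⟨hbound, ?_⟩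
  have hM := posSemidef_self_mul_conjTranspose Hpp
  obtain ⟨i, hi⟩ := hM.exists_eigenvalues_pos (mt self_mul_conjTranspose_eq_zero.mp hHpp)
  have hc_tendsto : Tendsto c atTop atTop :=
    (tendsto_atTop_add_const_left _ Pp (tendsto_id.atTop_mul_const hPc)).atTop_div_const
      (by exact_mod_cast hnpt)
  have hlog : Tendsto (fun α ↦ μ * Real.log (1 + c α * hM.isHermitian.eigenvalues i))
      atTop atTop :=
    (Real.tendsto_log_atTop.comp
      (tendsto_atTop_add_const_left _ _ (hc_tendsto.atTop_mul_const hi))).const_mul_atTop hμ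
  refine tendsto_nhds_top_mono (EReal.tendsto_coe_atTop.comp hlog) ?_
  filter_upwards [eventually_gt_atTop 0] with α hα
  exact (EReal.coe_le_coe_iff.mpr (mul_le_mul_of_nonneg_left
    (hM.log_one_add_mul_eigenvalues_le_LD_smul (hc α hα) i) hμ.le)).trans (hbound α hα)

theorem statement8 {npt nct npr ncr : ℕ}
    (hnpt : 0 < npt) (hnct : 0 < nct) (hnpr : 0 < npr) (hncr : 0 < ncr)
    (Hpp : Mat npr npt) (hHpp : Hpp ≠ 0) (Hcp : Mat npr nct) (Hcc : Mat ncr nct)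
    (Pp Pc : ℝ) (hPp : 0 < Pp) (hPc : 0 < Pc) (μ : ℝ) (hμ : 0 < μ) :
    (∀ α : ℝ, 0 < α →
      ((μ * LD (((((Pp + α * Pc) / npt : ℝ)) : ℂ) • (Hpp * Hppᴴ)) : ℝ) : EReal) ≤
        ⨆ R ∈ Rpart Hpp Hcp Hcc Pp Pc α, ((μ * R.1 + R.2 : ℝ) : EReal))
    ∧
    Tendsto (fun α : ℝ => ⨆ R ∈ Rpart Hpp Hcp Hcc Pp Pc α, ((μ * R.1 + R.2 : ℝ) : EReal))
      atTop (nhds (⊤ : EReal)) :=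
  statement8_general hnpt Hpp hHpp Hcp Hcc Pp Pc hPp hPc μ hμ

end
end

section
/- (Lemma 6.2, finiteness on (0,∞).) For every real μ and every α > 0, the quantity h(α) is finite; that is, the set of values μ·R_p + R_c with (R_p, R_c) ∈ R_part,out^α is nonempty and bounded above. -/
open Matrix Filter
open scoped ComplexOrder

noncomputable section

/-!
Every generating point of `R_part,out^α` is confined to a fixed box: for positive semidefinite
`M`, `0 ≤ log det (I + M) ≤ Tr M` (apply `log (1 + λ) ≤ λ` to the eigenvalues), and
`Tr (A Q Aᴴ) ≤ ‖A‖² Tr Q` for the Frobenius norm, so the power budget bounds both rates.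
The box is closed and convex, so it contains the whole region, which is therefore compact and
the continuous functional `μ R_p + R_c` is bounded above on it. The zero covariances give the
point `(0, 0)`.
-/

open scoped Matrix.Norms.Frobenius

namespace Matrix

variable {𝕜 m n : Type*} [RCLike 𝕜] [Fintype m] [Fintype n]

lemma re_trace_mul_conjTranspose (A : Matrix m n 𝕜) : RCLike.re (A * Aᴴ).trace = ‖A‖ ^ 2 := by
  rw [frobenius_norm_def, ← Real.sqrt_eq_rpow, Real.sq_sqrt (by positivity)]
  simp only [trace, diag_apply, mul_apply, conjTranspose_apply, map_sum, RCLike.star_def,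
    RCLike.mul_conj]
  norm_cast

/-- Writing `Q = Cᴴ C`, this is submultiplicativity of the Frobenius norm for `A Cᴴ`. -/
lemma PosSemidef.re_trace_mul_mul_conjTranspose_le {Q : Matrix n n 𝕜} (hQ : Q.PosSemidef)
    (A : Matrix m n 𝕜) : RCLike.re (A * Q * Aᴴ).trace ≤ ‖A‖ ^ 2 * RCLike.re Q.trace := by
  classical
  obtain ⟨C, rfl⟩ : ∃ C : Matrix n n 𝕜, Q = Cᴴ * C := by
    open MatrixOrder in exact CStarAlgebra.nonneg_iff_eq_star_mul_self.mp hQ.nonneg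
  have hAC : A * (Cᴴ * C) * Aᴴ = A * Cᴴ * (A * Cᴴ)ᴴ := by
    simp only [conjTranspose_mul, conjTranspose_conjTranspose, Matrix.mul_assoc]
  have hC : Cᴴ * C = Cᴴ * Cᴴᴴ := by rw [conjTranspose_conjTranspose]
  rw [hAC, hC, re_trace_mul_conjTranspose, re_trace_mul_conjTranspose, ← mul_pow]
  exact pow_le_pow_left₀ (norm_nonneg _) (frobenius_norm_mul A Cᴴ) 2

lemma IsHermitian.det_one_add [DecidableEq n] {M : Matrix n n 𝕜} (hM : M.IsHermitian) :
    (1 + M).det = ∏ i, ((1 + hM.eigenvalues i : ℝ) : 𝕜) := by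
  set U := hM.eigenvectorUnitary
  have hconj : 1 + M =
      U * diagonal (fun i ↦ ((1 + hM.eigenvalues i : ℝ) : 𝕜)) * star (U : Matrix n n 𝕜) := by
    conv_lhs => rw [hM.spectral_theorem, ← map_one (Unitary.conjStarAlgAut 𝕜 _ U), ← map_add]
    rw [Unitary.conjStarAlgAut_apply, ← diagonal_one, diagonal_add]
    congr 3
    ext i
    simp
  rw [hconj, det_mul, det_mul, mul_right_comm, ← det_mul, mem_unitaryGroup_iff.mp U.2, det_one,
    one_mul, det_diagonal]

end Matrix

lemma Matrix.PosSemidef.inv_ofReal_smul {ι : Type*} {c : ℝ} {M : Matrix ι ι ℂ}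
    (hM : M.PosSemidef) (hc : 0 ≤ c) : ((c : ℂ)⁻¹ • M).PosSemidef := by
  rw [← Complex.ofReal_inv]
  exact hM.smul (Complex.zero_le_real.mpr (inv_nonneg.mpr hc))

section LogDet

variable {ι κ : Type*} [Fintype ι] [Fintype κ]

lemma rTr_nonneg {Q : Matrix ι ι ℂ} (hQ : Q.PosSemidef) : 0 ≤ rTr Q :=
  (Complex.nonneg_iff.mp hQ.trace_nonneg).1

lemma rTr_inv_ofReal_smul (c : ℝ) (A : Matrix ι ι ℂ) :
    rTr ((c : ℂ)⁻¹ • A) = c⁻¹ * rTr A := by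
  simp [rTr, trace_smul, ← Complex.ofReal_inv]

lemma rTr_inv_smul_mul_mul_conjTranspose_le {c : ℝ} (hc : 0 ≤ c) {S : Matrix ι ι ℂ}
    (hS : S.PosSemidef) (B : Matrix κ ι ℂ) :
    rTr ((c : ℂ)⁻¹ • (B * S * Bᴴ)) ≤ ‖B‖ ^ 2 / c * rTr S := by
  rw [rTr_inv_ofReal_smul]
  calc c⁻¹ * rTr (B * S * Bᴴ) ≤ c⁻¹ * (‖B‖ ^ 2 * rTr S) :=
        mul_le_mul_of_nonneg_left (hS.re_trace_mul_mul_conjTranspose_le B) (inv_nonneg.mpr hc)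
    _ = ‖B‖ ^ 2 / c * rTr S := by ring

variable [DecidableEq ι]

lemma LD_eq_sum_log {M : Matrix ι ι ℂ} (hM : M.PosSemidef) :
    LD M = ∑ i, Real.log (1 + hM.1.eigenvalues i) := by
  have hdet : ((1 + M).det).re = ∏ i, (1 + hM.1.eigenvalues i) := by
    rw [hM.1.det_one_add, ← RCLike.ofReal_prod]
    exact RCLike.ofReal_re (K := ℂ) _
  rw [LD, hdet, Real.log_prod fun i _ ↦ by linarith [hM.eigenvalues_nonneg i]]

lemma LD_nonneg {M : Matrix ι ι ℂ} (hM : M.PosSemidef) : 0 ≤ LD M := by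
  rw [LD_eq_sum_log hM]
  exact Finset.sum_nonneg fun i _ ↦ Real.log_nonneg (by linarith [hM.eigenvalues_nonneg i])

lemma LD_le_rTr {M : Matrix ι ι ℂ} (hM : M.PosSemidef) : LD M ≤ rTr M := by
  have htr : rTr M = ∑ i, hM.1.eigenvalues i := by
    simp [rTr, hM.1.trace_eq_sum_eigenvalues]
  rw [LD_eq_sum_log hM, htr]
  refine Finset.sum_le_sum fun i _ ↦ ?_
  have := Real.log_le_sub_one_of_pos (x := 1 + hM.1.eigenvalues i)
    (by linarith [hM.eigenvalues_nonneg i])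
  linarith

end LogDet

section RateBounds

variable {ι ι' κ : Type*} [Fintype ι] [Fintype ι'] [Fintype κ] [DecidableEq κ] {c : ℝ}

lemma LD_inv_smul_mul_mul_conjTranspose_le (hc : 0 ≤ c) {S : Matrix ι ι ℂ} (hS : S.PosSemidef)
    (B : Matrix κ ι ℂ) : LD ((c : ℂ)⁻¹ • (B * S * Bᴴ)) ≤ ‖B‖ ^ 2 / c * rTr S :=
  (LD_le_rTr ((hS.mul_mul_conjTranspose_same B).inv_ofReal_smul hc)).trans
    (rTr_inv_smul_mul_mul_conjTranspose_le hc hS B)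

lemma LD_add_sub_LD_le (hc : 0 ≤ c) {Q : Matrix ι ι ℂ} {S : Matrix ι' ι' ℂ} (hQ : Q.PosSemidef)
    (hS : S.PosSemidef) (A : Matrix κ ι ℂ) (B : Matrix κ ι' ℂ) :
    LD (A * Q * Aᴴ + (c : ℂ)⁻¹ • (B * S * Bᴴ)) - LD ((c : ℂ)⁻¹ • (B * S * Bᴴ))
      ≤ ‖A‖ ^ 2 * rTr Q + ‖B‖ ^ 2 / c * rTr S := by
  have hY := (hS.mul_mul_conjTranspose_same B).inv_ofReal_smul hc
  calc _ ≤ LD (A * Q * Aᴴ + (c : ℂ)⁻¹ • (B * S * Bᴴ)) := sub_le_self _ (LD_nonneg hY)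
    _ ≤ rTr (A * Q * Aᴴ) + rTr ((c : ℂ)⁻¹ • (B * S * Bᴴ)) :=
        (LD_le_rTr ((hQ.mul_mul_conjTranspose_same A).add hY)).trans_eq (by simp [rTr])
    _ ≤ _ := add_le_add (hQ.re_trace_mul_mul_conjTranspose_le A)
        (rTr_inv_smul_mul_mul_conjTranspose_le hc hS B)

end RateBounds

section Rpart

variable {npt nct npr ncr : ℕ} (Hpp : Mat npr npt) (Hcp : Mat npr nct) (Hcc : Mat ncr nct)
  {Pp Pc α : ℝ}

lemma Rpart_subset_Icc_prod (hα : 0 ≤ α) :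
    Rpart Hpp Hcp Hcc Pp Pc α ⊆
      Set.Icc 0 ((‖Galpha Hpp Hcp α‖ ^ 2 + ‖Hcp‖ ^ 2 / α) * (Pp + α * Pc)) ×ˢ
        Set.Icc 0 (‖Hcc‖ ^ 2 / α * (Pp + α * Pc)) := by
  refine closure_minimal (convexHull_min ?_ ((convex_Icc _ _).prod (convex_Icc _ _)))
    (isClosed_Icc.prod isClosed_Icc)
  rintro ⟨Rp, Rc⟩ ⟨hRp, hRc, Qp, Scc, hQp, hScc, hbudget, hRp_le, hRc_le⟩
  have hQp_le : rTr Qp ≤ Pp + α * Pc := by linarith [rTr_nonneg hScc]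
  have hScc_le : rTr Scc ≤ Pp + α * Pc := by linarith [rTr_nonneg hQp]
  refine ⟨⟨hRp, ?_⟩, ⟨hRc, ?_⟩⟩
  · calc Rp ≤ ‖Galpha Hpp Hcp α‖ ^ 2 * rTr Qp + ‖Hcp‖ ^ 2 / α * rTr Scc :=
          hRp_le.trans (LD_add_sub_LD_le hα hQp hScc _ _)
      _ ≤ _ := by rw [add_mul]; gcongr
  · calc Rc ≤ ‖Hcc‖ ^ 2 / α * rTr Scc :=
          hRc_le.trans (LD_inv_smul_mul_mul_conjTranspose_le hα hScc Hcc)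
      _ ≤ _ := by gcongr

lemma zero_mem_Rpart (hP : 0 ≤ Pp + α * Pc) : (0 : ℝ × ℝ) ∈ Rpart Hpp Hcp Hcc Pp Pc α :=
  subset_closure <| subset_convexHull ℝ _
    ⟨le_rfl, le_rfl, 0, 0, .zero, .zero, by simpa [rTr] using hP, by simp [LD], by simp [LD]⟩

end Rpart

theorem statement9_general {npt nct npr ncr : ℕ}
    (Hpp : Mat npr npt) (Hcp : Mat npr nct) (Hcc : Mat ncr nct)
    (Pp Pc : ℝ) (hPp : 0 < Pp) (hPc : 0 < Pc) (μ : ℝ) (α : ℝ) (hα : 0 < α) :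
    ((fun R : ℝ × ℝ => μ * R.1 + R.2) '' Rpart Hpp Hcp Hcc Pp Pc α).Nonempty ∧
    BddAbove ((fun R : ℝ × ℝ => μ * R.1 + R.2) '' Rpart Hpp Hcp Hcc Pp Pc α) := by
  have hbounded : Bornology.IsBounded (Rpart Hpp Hcp Hcc Pp Pc α) :=
    (Metric.isBounded_Icc _ _).prod (Metric.isBounded_Icc _ _) |>.subset
      (Rpart_subset_Icc_prod Hpp Hcp Hcc hα.le)
  have hcompact : IsCompact (Rpart Hpp Hcp Hcc Pp Pc α) :=
    Metric.isCompact_of_isClosed_isBounded isClosed_closure hbounded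
  exact ⟨⟨_, Set.mem_image_of_mem _ (zero_mem_Rpart Hpp Hcp Hcc (by positivity))⟩,
    hcompact.bddAbove_image (by fun_prop : Continuous _).continuousOn⟩

theorem statement9 {npt nct npr ncr : ℕ}
    (hnpt : 0 < npt) (hnct : 0 < nct) (hnpr : 0 < npr) (hncr : 0 < ncr)
    (Hpp : Mat npr npt) (Hcp : Mat npr nct) (Hcc : Mat ncr nct)
    (Pp Pc : ℝ) (hPp : 0 < Pp) (hPc : 0 < Pc) (μ : ℝ) (α : ℝ) (hα : 0 < α) :
    ((fun R : ℝ × ℝ => μ * R.1 + R.2) '' Rpart Hpp Hcp Hcc Pp Pc α).Nonempty ∧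
    BddAbove ((fun R : ℝ × ℝ => μ * R.1 + R.2) '' Rpart Hpp Hcp Hcc Pp Pc α) :=
  statement9_general Hpp Hcp Hcc Pp Pc hPp hPc μ α hα
end
end
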